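/- arXiv:2505.20786 — 5 statements merged into one kernel-verified Lean document; each statement's English description precedes it below -/
import Mathlib

section
/- Let q_n, q_{n+1}, q_{n+2} : ℝ × ℝ → ℂ be smooth functions of (ξ,η) such that the rescaled two-dimensional Toda lattice equation holds at index n+1: ∂²q_{n+1}/∂ξ∂η = (1/4)(e^{q_{n+2}−q_{n+1}} − e^{q_{n+1}−q_n}). Define Q₁ := −e^{−q_n}, Q₂ := e^{q_{n+1}}, Q₁⁺ := −e^{−q_{n+1}}, Q₂⁺ := e^{q_{n+2}}. Then the Bäcklund transformation formulas hold: Q₁⁺ = −1/Q₂ and Q₂⁺ = 4·∂²Q₂/∂ξ∂η − 4·(∂Q₂/∂ξ)(∂Q₂/∂η)/Q₂ − Q₂²·Q₁. -/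
/-- Partial derivative in the first variable (ξ) of a function `ℝ × ℝ → ℂ`. -/
noncomputable def pdXi (f : ℝ × ℝ → ℂ) (p : ℝ × ℝ) : ℂ :=
  deriv (fun s => f (s, p.2)) p.1

/-- Partial derivative in the second variable (η) of a function `ℝ × ℝ → ℂ`. -/
noncomputable def pdEta (f : ℝ × ℝ → ℂ) (p : ℝ × ℝ) : ℂ :=
  deriv (fun s => f (p.1, s)) p.2

lemma slice2_hasDerivAt (f : ℝ × ℝ → ℂ) (hf : ContDiff ℝ (⊤ : ℕ∞) f) (p : ℝ × ℝ) :
    HasDerivAt (fun s => f (p.1, s)) (fderiv ℝ f p ((0:ℝ),(1:ℝ))) p.2 := by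
  have h1 : HasDerivAt (fun s : ℝ => ((p.1 : ℝ), s)) ((0:ℝ),(1:ℝ)) p.2 :=
    (hasDerivAt_const _ _).prodMk (hasDerivAt_id _)
  have := ((hf.differentiable (by norm_num) (p.1, p.2)).hasFDerivAt).comp_hasDerivAt p.2 h1
  exact this

lemma slice1_hasDerivAt (f : ℝ × ℝ → ℂ) (hf : ContDiff ℝ (⊤ : ℕ∞) f) (p : ℝ × ℝ) :
    HasDerivAt (fun s => f (s, p.2)) (fderiv ℝ f p ((1:ℝ),(0:ℝ))) p.1 := by
  have h1 : HasDerivAt (fun s : ℝ => (s, (p.2 : ℝ))) ((1:ℝ),(0:ℝ)) p.1 :=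
    (hasDerivAt_id _).prodMk (hasDerivAt_const _ _)
  have := ((hf.differentiable (by norm_num) (p.1, p.2)).hasFDerivAt).comp_hasDerivAt p.1 h1
  exact this

lemma pdEta_eq (f : ℝ × ℝ → ℂ) (hf : ContDiff ℝ (⊤ : ℕ∞) f) (p : ℝ × ℝ) :
    pdEta f p = fderiv ℝ f p ((0:ℝ),(1:ℝ)) := (slice2_hasDerivAt f hf p).deriv

lemma pdXi_eq (f : ℝ × ℝ → ℂ) (hf : ContDiff ℝ (⊤ : ℕ∞) f) (p : ℝ × ℝ) :
    pdXi f p = fderiv ℝ f p ((1:ℝ),(0:ℝ)) := (slice1_hasDerivAt f hf p).deriv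

lemma pdEta_contDiff (f : ℝ × ℝ → ℂ) (hf : ContDiff ℝ (⊤ : ℕ∞) f) :
    ContDiff ℝ (⊤ : ℕ∞) (pdEta f) := by
  have : pdEta f = fun p => fderiv ℝ f p ((0:ℝ),(1:ℝ)) := funext (pdEta_eq f hf)
  rw [this]
  exact (hf.fderiv_right (by exact_mod_cast le_top)).clm_apply contDiff_const

/-- The Bäcklund transformation of the rescaled 2D Toda lattice. -/
theorem backlund_transformation
    (qn qn1 qn2 : ℝ × ℝ → ℂ)
    (hqn : ContDiff ℝ (⊤ : ℕ∞) qn)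
    (hqn1 : ContDiff ℝ (⊤ : ℕ∞) qn1)
    (hqn2 : ContDiff ℝ (⊤ : ℕ∞) qn2)
    (hToda : ∀ p, pdXi (pdEta qn1) p =
      (1 / 4) * (Complex.exp (qn2 p - qn1 p) - Complex.exp (qn1 p - qn p)))
    (Q₁ Q₂ Q₁p Q₂p : ℝ × ℝ → ℂ)
    (hQ₁ : ∀ p, Q₁ p = -Complex.exp (-qn p))
    (hQ₂ : ∀ p, Q₂ p = Complex.exp (qn1 p))
    (hQ₁p : ∀ p, Q₁p p = -Complex.exp (-qn1 p))
    (hQ₂p : ∀ p, Q₂p p = Complex.exp (qn2 p)) :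
    ∀ p, Q₁p p = -1 / Q₂ p ∧
      Q₂p p = 4 * pdXi (pdEta Q₂) p - 4 * (pdXi Q₂ p * pdEta Q₂ p) / Q₂ p
        - (Q₂ p) ^ 2 * Q₁ p := by
  have hQ₂fun : Q₂ = fun q => Complex.exp (qn1 q) := funext hQ₂
  -- pdEta Q₂ as a function
  have hA : pdEta Q₂ = fun q => Complex.exp (qn1 q) * pdEta qn1 q := by
    funext q
    have h := (slice2_hasDerivAt qn1 hqn1 q).cexp
    rw [pdEta, hQ₂fun, pdEta_eq qn1 hqn1 q]
    exact h.deriv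
  -- pdXi Q₂ pointwise
  have hXiQ₂ : ∀ q, pdXi Q₂ q = Complex.exp (qn1 q) * pdXi qn1 q := by
    intro q
    have h := (slice1_hasDerivAt qn1 hqn1 q).cexp
    rw [pdXi, hQ₂fun, pdXi_eq qn1 hqn1 q]
    exact h.deriv
  intro p
  constructor
  · rw [hQ₁p, hQ₂, Complex.exp_neg]
    field_simp
  · -- compute pdXi (pdEta Q₂) p
    have h1 : HasDerivAt (fun s => Complex.exp (qn1 (s, p.2)))
        (Complex.exp (qn1 p) * fderiv ℝ qn1 p ((1:ℝ),(0:ℝ))) p.1 := by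
      simpa using (slice1_hasDerivAt qn1 hqn1 p).cexp
    have h2 := slice1_hasDerivAt (pdEta qn1) (pdEta_contDiff qn1 hqn1) p
    have hB : pdXi (pdEta Q₂) p
        = Complex.exp (qn1 p) * pdXi qn1 p * pdEta qn1 p
          + Complex.exp (qn1 p) * pdXi (pdEta qn1) p := by
      rw [hA, pdXi, pdXi_eq qn1 hqn1 p, pdXi_eq _ (pdEta_contDiff qn1 hqn1) p]
      have h := h1.mul h2
      have hd := h.deriv
      exact hd
    have hEtaQ₂ : pdEta Q₂ p = Complex.exp (qn1 p) * pdEta qn1 p := by rw [hA]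
    have e1 := Complex.exp_ne_zero (qn1 p)
    rw [hQ₂p, hB, hXiQ₂, hEtaQ₂, hToda p, hQ₂, hQ₁]
    have hfrac : 4 * (Complex.exp (qn1 p) * pdXi qn1 p * (Complex.exp (qn1 p) * pdEta qn1 p))
        / Complex.exp (qn1 p)
        = 4 * (Complex.exp (qn1 p) * (pdXi qn1 p * pdEta qn1 p)) := by
      field_simp
    rw [hfrac]
    have k1 : Complex.exp (qn1 p) * Complex.exp (qn2 p - qn1 p) = Complex.exp (qn2 p) := by
      rw [← Complex.exp_add]
      norm_num
    have k2 : Complex.exp (qn1 p) ^ 2 * Complex.exp (-qn p)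
        = Complex.exp (qn1 p) * Complex.exp (qn1 p - qn p) := by
      rw [sq, mul_assoc, ← Complex.exp_add, ← Complex.exp_add, ← Complex.exp_add]
      ring_nf
    linear_combination -k1 - k2
end

section
/- Let α, ρ : ℝ → ℝ and δ, θ : ℝ → ℝ be twice continuously differentiable functions such that for all x, y ∈ ℝ one has θ(y) + ρ(x) > 0 and θ′(y)·ρ′(x) < 0. Define q₁(x,y) := α(x) − δ(y) + ln(θ(y) + ρ(x)) and q₂(x,y) := α(x) − δ(y) + ln(−θ′(y)·ρ′(x)) − ln(θ(y) + ρ(x)). Then (q₁, q₂) solves the generalized Toda lattice corresponding to the Lie algebra A₂: ∂²q₁/∂x∂y = e^{q₂−q₁} and ∂²q₂/∂x∂y = −e^{q₂−q₁}. -/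
/-- Partial derivative in the first variable (x) of a function `ℝ × ℝ → ℝ`. -/
noncomputable def pdx (f : ℝ × ℝ → ℝ) (p : ℝ × ℝ) : ℝ :=
  deriv (fun s => f (s, p.2)) p.1

/-- Partial derivative in the second variable (y) of a function `ℝ × ℝ → ℝ`. -/
noncomputable def pdy (f : ℝ × ℝ → ℝ) (p : ℝ × ℝ) : ℝ :=
  deriv (fun s => f (p.1, s)) p.2

/-- Explicit general solution of the generalized Toda lattice
corresponding to the Lie algebra `A₂`. -/
theorem A2_toda_general_solution
    (α ρ δ θ : ℝ → ℝ)
    (hα : ContDiff ℝ 2 α) (hρ : ContDiff ℝ 2 ρ)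
    (hδ : ContDiff ℝ 2 δ) (hθ : ContDiff ℝ 2 θ)
    (hpos : ∀ x y : ℝ, 0 < θ y + ρ x)
    (hneg : ∀ x y : ℝ, deriv θ y * deriv ρ x < 0)
    (q₁ q₂ : ℝ × ℝ → ℝ)
    (hq₁ : ∀ x y : ℝ, q₁ (x, y) = α x - δ y + Real.log (θ y + ρ x))
    (hq₂ : ∀ x y : ℝ, q₂ (x, y) =
      α x - δ y + Real.log (-(deriv θ y * deriv ρ x)) - Real.log (θ y + ρ x)) :
    ∀ p : ℝ × ℝ,
      pdx (pdy q₁) p = Real.exp (q₂ p - q₁ p) ∧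
      pdx (pdy q₂) p = -Real.exp (q₂ p - q₁ p) := by
  have hθd : Differentiable ℝ θ := hθ.differentiable two_ne_zero
  have hρd : Differentiable ℝ ρ := hρ.differentiable two_ne_zero
  have hδd : Differentiable ℝ δ := hδ.differentiable two_ne_zero
  have hθ1 : ContDiff ℝ 1 (deriv θ) := by
    exact ((contDiff_succ_iff_deriv (n := 1)).mp (show ContDiff ℝ (1 + 1 : ℕ) θ from hθ)).2.2
  have hθ'd : Differentiable ℝ (deriv θ) := hθ1.differentiable one_ne_zero
  have hθ'ne : ∀ y : ℝ, deriv θ y ≠ 0 := fun y => by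
    intro h; have := hneg 0 y; rw [h] at this; simp at this
  have hρ'ne : ∀ x : ℝ, deriv ρ x ≠ 0 := fun x => by
    intro h; have := hneg x 0; rw [h] at this; simp at this
  have hsum : ∀ x y : ℝ, θ y + ρ x ≠ 0 := fun x y => ne_of_gt (hpos x y)
  -- pdy of q₁
  have hpy1 : ∀ x y : ℝ, pdy q₁ (x, y)
      = 0 - deriv δ y + deriv θ y / (θ y + ρ x) := by
    intro x y
    have hfun : (fun s => q₁ ((x, y).1, s)) = fun s => α x - δ s + Real.log (θ s + ρ x) :=
      funext fun s => hq₁ x s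
    have hd : HasDerivAt (fun s => α x - δ s + Real.log (θ s + ρ x))
        (0 - deriv δ y + deriv θ y / (θ y + ρ x)) y := by
      exact ((hasDerivAt_const y (α x)).sub (hδd y).hasDerivAt).add
        (((hθd y).hasDerivAt.add_const (ρ x)).log (hsum x y))
    rw [pdy, hfun]
    exact hd.deriv
  -- pdy of q₂
  have hpy2 : ∀ x y : ℝ, pdy q₂ (x, y)
      = (0 - deriv δ y + deriv (deriv θ) y / deriv θ y) - deriv θ y / (θ y + ρ x) := by
    intro x y
    have hfun : (fun s => q₂ ((x, y).1, s))
        = fun s => α x - δ s + Real.log (-(deriv θ s * deriv ρ x)) - Real.log (θ s + ρ x) :=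
      funext fun s => hq₂ x s
    have hne : -(deriv θ y * deriv ρ x) ≠ 0 := by
      have := hneg x y; intro h; nlinarith
    have hd : HasDerivAt
        (fun s => α x - δ s + Real.log (-(deriv θ s * deriv ρ x)) - Real.log (θ s + ρ x))
        ((0 - deriv δ y + (-(deriv (deriv θ) y * deriv ρ x)) / (-(deriv θ y * deriv ρ x)))
          - deriv θ y / (θ y + ρ x)) y := by
      exact (((hasDerivAt_const y (α x)).sub (hδd y).hasDerivAt).add
        ((((hθ'd y).hasDerivAt.mul_const (deriv ρ x)).neg).log hne)).sub
        (((hθd y).hasDerivAt.add_const (ρ x)).log (hsum x y))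
    rw [pdy, hfun, hd.deriv]
    have : (-(deriv (deriv θ) y * deriv ρ x)) / (-(deriv θ y * deriv ρ x))
        = deriv (deriv θ) y / deriv θ y := by
      rw [neg_div_neg_eq, mul_div_mul_right _ _ (hρ'ne x)]
    rw [this]
  -- the exponential
  intro p
  obtain ⟨x, y⟩ := p
  have hexp : Real.exp (q₂ (x, y) - q₁ (x, y))
      = -(deriv θ y * deriv ρ x) / (θ y + ρ x) ^ 2 := by
    have h1 : 0 < -(deriv θ y * deriv ρ x) := by linarith [hneg x y]
    have h2 := hpos x y
    rw [hq₁, hq₂]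
    have : α x - δ y + Real.log (-(deriv θ y * deriv ρ x)) - Real.log (θ y + ρ x)
        - (α x - δ y + Real.log (θ y + ρ x))
        = Real.log (-(deriv θ y * deriv ρ x)) - (Real.log (θ y + ρ x) + Real.log (θ y + ρ x)) := by
      ring
    rw [this, Real.exp_sub, Real.exp_add, Real.exp_log h1, Real.exp_log h2]
    ring
  constructor
  · have hfun : (fun s => pdy q₁ (s, y)) = fun s => 0 - deriv δ y + deriv θ y / (θ y + ρ s) :=
      funext fun s => hpy1 s y
    have hd : HasDerivAt (fun s => 0 - deriv δ y + deriv θ y / (θ y + ρ s))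
        (0 + (0 * (θ y + ρ x) - deriv θ y * deriv ρ x) / (θ y + ρ x) ^ 2) x := by
      exact (hasDerivAt_const x (0 - deriv δ y)).add
        ((hasDerivAt_const x (deriv θ y)).div ((hρd x).hasDerivAt.const_add (θ y)) (hsum x y))
    rw [pdx]
    simp only
    rw [hfun, hd.deriv, hexp]
    ring
  · have hfun : (fun s => pdy q₂ (s, y))
        = fun s => (0 - deriv δ y + deriv (deriv θ) y / deriv θ y) - deriv θ y / (θ y + ρ s) :=
      funext fun s => hpy2 s y
    have hd : HasDerivAt
        (fun s => (0 - deriv δ y + deriv (deriv θ) y / deriv θ y) - deriv θ y / (θ y + ρ s))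
        (0 - (0 * (θ y + ρ x) - deriv θ y * deriv ρ x) / (θ y + ρ x) ^ 2) x := by
      exact (hasDerivAt_const x _).sub
        ((hasDerivAt_const x (deriv θ y)).div ((hρd x).hasDerivAt.const_add (θ y)) (hsum x y))
    rw [pdx]
    simp only
    rw [hfun, hd.deriv, hexp]
    ring
end

section
/- Let α, ρ : ℝ → ℝ and δ, θ : ℝ → ℝ be twice continuously differentiable with θ(y) + ρ(x) > 0 and θ′(y)·ρ′(x) < 0 for all x, y ∈ ℝ, and define q₁(x,y) := α(x) − δ(y) + ln(θ(y) + ρ(x)) and q₂(x,y) := α(x) − δ(y) + ln(−θ′(y)·ρ′(x)) − ln(θ(y) + ρ(x)). Then the functions ψ₁(x,y) := e^{δ(y)}/(θ(y) + ρ(x)) and ψ₂(x,y) := −e^{δ(y)}/θ′(y) satisfy the Lax pair of the A₂ generalized Toda lattice: ∂ψ₁/∂x = −e^{q₂−q₁}·ψ₂, ∂ψ₁/∂y = −(∂q₁/∂y)·ψ₁, ∂ψ₂/∂x = 0, and ∂ψ₂/∂y = −(∂q₂/∂y)·ψ₂ + ψ₁. -/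
/-- Explicit eigenfunctions of the Lax pair of the generalized
Toda lattice corresponding to the Lie algebra `A₂`. -/
theorem A2_toda_Lax_eigenfunctions
    (α ρ δ θ : ℝ → ℝ)
    (hα : ContDiff ℝ 2 α) (hρ : ContDiff ℝ 2 ρ)
    (hδ : ContDiff ℝ 2 δ) (hθ : ContDiff ℝ 2 θ)
    (hpos : ∀ x y : ℝ, 0 < θ y + ρ x)
    (hneg : ∀ x y : ℝ, deriv θ y * deriv ρ x < 0)
    (q₁ q₂ ψ₁ ψ₂ : ℝ × ℝ → ℝ)
    (hq₁ : ∀ x y : ℝ, q₁ (x, y) = α x - δ y + Real.log (θ y + ρ x))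
    (hq₂ : ∀ x y : ℝ, q₂ (x, y) =
      α x - δ y + Real.log (-(deriv θ y * deriv ρ x)) - Real.log (θ y + ρ x))
    (hψ₁ : ∀ x y : ℝ, ψ₁ (x, y) = Real.exp (δ y) / (θ y + ρ x))
    (hψ₂ : ∀ x y : ℝ, ψ₂ (x, y) = -Real.exp (δ y) / deriv θ y) :
    ∀ p : ℝ × ℝ,
      pdx ψ₁ p = -Real.exp (q₂ p - q₁ p) * ψ₂ p ∧
      pdy ψ₁ p = -(pdy q₁ p) * ψ₁ p ∧
      pdx ψ₂ p = 0 ∧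
      pdy ψ₂ p = -(pdy q₂ p) * ψ₂ p + ψ₁ p := by
  -- basic differentiability facts
  have hθd : Differentiable ℝ θ := hθ.differentiable (by norm_num)
  have hρd : Differentiable ℝ ρ := hρ.differentiable (by norm_num)
  have hδd : Differentiable ℝ δ := hδ.differentiable (by norm_num)
  have hαd : Differentiable ℝ α := hα.differentiable (by norm_num)
  have hθ2 : ContDiff ℝ ((1 : WithTop ℕ∞) + 1) θ := by
    exact_mod_cast hθ
  have hθ'd : Differentiable ℝ (deriv θ) :=
    ((contDiff_succ_iff_deriv.mp hθ2).2.2).differentiable (by norm_num)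
  have hθ'ne : ∀ y : ℝ, deriv θ y ≠ 0 := by
    intro y h
    have := hneg 0 y
    rw [h] at this; simp at this
  have hρ'ne : ∀ x : ℝ, deriv ρ x ≠ 0 := by
    intro x h
    have := hneg x 0
    rw [h] at this; simp at this
  have hsum : ∀ x y : ℝ, θ y + ρ x ≠ 0 := fun x y => (hpos x y).ne'
  rintro ⟨x, y⟩
  have hsumne := hsum x y
  have hθ'y := hθ'ne y
  have hρ'x := hρ'ne x
  -- 1. pdx ψ₁
  have e1 : pdx ψ₁ (x, y) = -Real.exp (δ y) * deriv ρ x / (θ y + ρ x) ^ 2 := by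
    have hfun : (fun s => ψ₁ (s, y)) = fun s => Real.exp (δ y) / (θ y + ρ s) := by
      funext s; exact hψ₁ s y
    have hd : HasDerivAt (fun s => Real.exp (δ y) / (θ y + ρ s))
        ((0 * (θ y + ρ x) - Real.exp (δ y) * deriv ρ x) / (θ y + ρ x) ^ 2) x :=
      (hasDerivAt_const x (Real.exp (δ y))).div
        (((hρd x).hasDerivAt).const_add (θ y)) hsumne
    rw [pdx]; simp only [hfun]
    rw [hd.deriv]; ring
  -- 2. pdy ψ₁
  have e2 : pdy ψ₁ (x, y) =
      (deriv δ y * Real.exp (δ y) * (θ y + ρ x) - Real.exp (δ y) * deriv θ y)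
        / (θ y + ρ x) ^ 2 := by
    have hfun : (fun s => ψ₁ (x, s)) = fun s => Real.exp (δ s) / (θ s + ρ x) := by
      funext s; exact hψ₁ x s
    have hd : HasDerivAt (fun s => Real.exp (δ s) / (θ s + ρ x))
        ((Real.exp (δ y) * deriv δ y * (θ y + ρ x) - Real.exp (δ y) * deriv θ y)
          / (θ y + ρ x) ^ 2) y :=
      ((hδd y).hasDerivAt.exp).div (((hθd y).hasDerivAt).add_const (ρ x)) hsumne
    rw [pdy]; simp only [hfun]
    rw [hd.deriv]; ring
  -- pdy q₁
  have eq1 : pdy q₁ (x, y) = -deriv δ y + deriv θ y / (θ y + ρ x) := by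
    have hfun : (fun s => q₁ (x, s)) =
        fun s => α x - δ s + Real.log (θ s + ρ x) := by
      funext s; exact hq₁ x s
    have hd : HasDerivAt (fun s => α x - δ s + Real.log (θ s + ρ x))
        (-deriv δ y + deriv θ y / (θ y + ρ x)) y := by
      have h1 : HasDerivAt (fun s => α x - δ s) (-deriv δ y) y :=
        ((hδd y).hasDerivAt).const_sub (α x)
      have h2 : HasDerivAt (fun s => Real.log (θ s + ρ x))
          (deriv θ y / (θ y + ρ x)) y :=
        (((hθd y).hasDerivAt).add_const (ρ x)).log hsumne
      exact h1.add h2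
    rw [pdy]; simp only [hfun]; exact hd.deriv
  -- 3. pdx ψ₂
  have e3 : pdx ψ₂ (x, y) = 0 := by
    have hfun : (fun s => ψ₂ (s, y)) = fun _ => -Real.exp (δ y) / deriv θ y := by
      funext s; exact hψ₂ s y
    rw [pdx]; simp only [hfun]; exact deriv_const _ _
  -- 4. pdy ψ₂
  have e4 : pdy ψ₂ (x, y) =
      (-(Real.exp (δ y) * deriv δ y) * deriv θ y
        - -Real.exp (δ y) * deriv (deriv θ) y) / deriv θ y ^ 2 := by
    have hfun : (fun s => ψ₂ (x, s)) = fun s => -Real.exp (δ s) / deriv θ s := by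
      funext s; exact hψ₂ x s
    have hd : HasDerivAt (fun s => -Real.exp (δ s) / deriv θ s)
        ((-(Real.exp (δ y) * deriv δ y) * deriv θ y
          - -Real.exp (δ y) * deriv (deriv θ) y) / deriv θ y ^ 2) y :=
      (((hδd y).hasDerivAt.exp).neg).div ((hθ'd y).hasDerivAt) hθ'y
    rw [pdy]; simp only [hfun]; exact hd.deriv
  -- pdy q₂
  have eq2 : pdy q₂ (x, y) = -deriv δ y + deriv (deriv θ) y / deriv θ y
      - deriv θ y / (θ y + ρ x) := by
    have hfun : (fun s => q₂ (x, s)) = fun s =>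
        α x - δ s + Real.log (-(deriv θ s * deriv ρ x)) - Real.log (θ s + ρ x) := by
      funext s; exact hq₂ x s
    have hne : -(deriv θ y * deriv ρ x) ≠ 0 := by
      have := hneg x y; intro h; nlinarith
    have hd : HasDerivAt
        (fun s => α x - δ s + Real.log (-(deriv θ s * deriv ρ x))
          - Real.log (θ s + ρ x))
        (-deriv δ y + -(deriv (deriv θ) y * deriv ρ x) / -(deriv θ y * deriv ρ x)
          - deriv θ y / (θ y + ρ x)) y := by
      have h1 : HasDerivAt (fun s => α x - δ s) (-deriv δ y) y :=
        ((hδd y).hasDerivAt).const_sub (α x)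
      have h2 : HasDerivAt (fun s => Real.log (-(deriv θ s * deriv ρ x)))
          (-(deriv (deriv θ) y * deriv ρ x) / -(deriv θ y * deriv ρ x)) y :=
        ((((hθ'd y).hasDerivAt).mul_const (deriv ρ x)).neg).log hne
      have h3 : HasDerivAt (fun s => Real.log (θ s + ρ x))
          (deriv θ y / (θ y + ρ x)) y :=
        (((hθd y).hasDerivAt).add_const (ρ x)).log hsumne
      exact (h1.add h2).sub h3
    rw [pdy]; simp only [hfun]; rw [hd.deriv]
    field_simp
  -- the exponential factor
  have hexp : Real.exp (q₂ (x, y) - q₁ (x, y)) =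
      -(deriv θ y * deriv ρ x) / ((θ y + ρ x) * (θ y + ρ x)) := by
    rw [hq₁, hq₂]
    have : α x - δ y + Real.log (-(deriv θ y * deriv ρ x)) - Real.log (θ y + ρ x)
        - (α x - δ y + Real.log (θ y + ρ x))
        = Real.log (-(deriv θ y * deriv ρ x))
          - (Real.log (θ y + ρ x) + Real.log (θ y + ρ x)) := by ring
    rw [this, Real.exp_sub, Real.exp_add,
      Real.exp_log (by nlinarith [hneg x y]), Real.exp_log (hpos x y)]
  refine ⟨?_, ?_, e3, ?_⟩
  · rw [e1, hexp, hψ₂]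
    field_simp
  · rw [e2, eq1, hψ₁]
    field_simp
    ring
  · rw [e4, eq2, hψ₂, hψ₁]
    field_simp
    ring
end

section
/- Let s₁, s₂ : ℝ → ℂ be continuous, let α : ℝ × ℝ → ℂ be a function of (ξ,t) satisfying α_t = i·α_{ξξ} − i·(α_ξ)², and let ρ : ℝ × ℝ → ℂ be a function of (ξ,t) satisfying ρ_t = −i·ρ_{ξξ} − 2i·α_ξ·ρ_ξ + s₁(t)·ρ + s₂(t), all sufficiently smooth (α of class C³ and ρ of class C³). Then σ := ρ_ξ·e^{α} satisfies σ_t = −i·σ_{ξξ} + s₁(t)·σ, and β₃ := ρ_ξ·e^{α}·e^{−∫₀ᵗ s₁(τ)dτ} satisfies the conjugate heat equation with imaginary time β₃,t = −i·β₃,ξξ. -/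
/-- Partial derivative in the second (time) variable of a function `ℝ × ℝ → ℂ`. -/
noncomputable def pdT (f : ℝ × ℝ → ℂ) (p : ℝ × ℝ) : ℂ :=
  deriv (fun s => f (p.1, s)) p.2

lemma hasDerivAt_pdXi {f : ℝ × ℝ → ℂ} (hf : Differentiable ℝ f) (q : ℝ × ℝ) :
    HasDerivAt (fun s => f (s, q.2)) (pdXi f q) q.1 := by
  have h : DifferentiableAt ℝ (fun s => f (s, q.2)) q.1 :=
    (hf (q.1, q.2)).comp q.1 (differentiableAt_id.prodMk (differentiableAt_const _))
  exact h.hasDerivAt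

lemma hasDerivAt_pdT {f : ℝ × ℝ → ℂ} (hf : Differentiable ℝ f) (q : ℝ × ℝ) :
    HasDerivAt (fun s => f (q.1, s)) (pdT f q) q.2 := by
  have h : DifferentiableAt ℝ (fun s => f (q.1, s)) q.2 :=
    (hf (q.1, q.2)).comp q.2 ((differentiableAt_const _).prodMk differentiableAt_id)
  exact h.hasDerivAt

lemma pdXi_eq_fderiv {f : ℝ × ℝ → ℂ} {p : ℝ × ℝ} (hf : DifferentiableAt ℝ f p) :
    pdXi f p = fderiv ℝ f p (1, 0) := by
  have h : HasDerivAt (fun s => f (s, p.2)) (fderiv ℝ f p ((1:ℝ), (0:ℝ))) p.1 :=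
    hf.hasFDerivAt.comp_hasDerivAt p.1 ((hasDerivAt_id p.1).prodMk (hasDerivAt_const p.1 p.2))
  exact h.deriv

lemma pdT_eq_fderiv {f : ℝ × ℝ → ℂ} {p : ℝ × ℝ} (hf : DifferentiableAt ℝ f p) :
    pdT f p = fderiv ℝ f p (0, 1) := by
  have h : HasDerivAt (fun s => f (p.1, s)) (fderiv ℝ f p ((0:ℝ), (1:ℝ))) p.2 :=
    hf.hasFDerivAt.comp_hasDerivAt p.2 ((hasDerivAt_const p.2 p.1).prodMk (hasDerivAt_id p.2))
  exact h.deriv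

lemma contDiff_pdXi {n : ℕ∞} {f : ℝ × ℝ → ℂ} (hf : ContDiff ℝ ((n : WithTop ℕ∞) + 1) f) :
    ContDiff ℝ (n : WithTop ℕ∞) (pdXi f) := by
  have hd : Differentiable ℝ f := hf.differentiable (by simp)
  have h : pdXi f = fun p => (fderiv ℝ f p) ((1:ℝ), (0:ℝ)) :=
    funext fun p => pdXi_eq_fderiv (hd p)
  rw [h]
  exact (ContinuousLinearMap.apply ℝ ℂ ((1:ℝ), (0:ℝ))).contDiff.comp (hf.fderiv_right le_rfl)

lemma pdT_pdXi_comm {f : ℝ × ℝ → ℂ} (hf : ContDiff ℝ 2 f) (p : ℝ × ℝ) :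
    pdT (pdXi f) p = pdXi (pdT f) p := by
  have hd : Differentiable ℝ f := hf.differentiable two_ne_zero
  have hF : Differentiable ℝ (fderiv ℝ f) :=
    (hf.fderiv_right (m := 1) (by norm_num)).differentiable one_ne_zero
  have hXi : pdXi f = fun q => fderiv ℝ f q ((1:ℝ), (0:ℝ)) :=
    funext fun q => pdXi_eq_fderiv (hd q)
  have hT : pdT f = fun q => fderiv ℝ f q ((0:ℝ), (1:ℝ)) :=
    funext fun q => pdT_eq_fderiv (hd q)
  have h1 : HasDerivAt (fun s => fderiv ℝ f (p.1, s)) (fderiv ℝ (fderiv ℝ f) p ((0:ℝ),(1:ℝ))) p.2 :=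
    (hF p).hasFDerivAt.comp_hasDerivAt p.2 ((hasDerivAt_const p.2 p.1).prodMk (hasDerivAt_id p.2))
  have h2 : HasDerivAt (fun s => fderiv ℝ f (s, p.2)) (fderiv ℝ (fderiv ℝ f) p ((1:ℝ),(0:ℝ))) p.1 :=
    (hF p).hasFDerivAt.comp_hasDerivAt p.1 ((hasDerivAt_id p.1).prodMk (hasDerivAt_const p.1 p.2))
  have h1' : HasDerivAt (fun s => fderiv ℝ f (p.1, s) ((1:ℝ),(0:ℝ)))
      ((fderiv ℝ (fderiv ℝ f) p ((0:ℝ),(1:ℝ))) ((1:ℝ),(0:ℝ))) p.2 :=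
    (ContinuousLinearMap.apply ℝ ℂ ((1:ℝ),(0:ℝ))).hasFDerivAt.comp_hasDerivAt p.2 h1
  have h2' : HasDerivAt (fun s => fderiv ℝ f (s, p.2) ((0:ℝ),(1:ℝ)))
      ((fderiv ℝ (fderiv ℝ f) p ((1:ℝ),(0:ℝ))) ((0:ℝ),(1:ℝ))) p.1 :=
    (ContinuousLinearMap.apply ℝ ℂ ((0:ℝ),(1:ℝ))).hasFDerivAt.comp_hasDerivAt p.1 h2
  have e1 : pdT (pdXi f) p = (fderiv ℝ (fderiv ℝ f) p ((0:ℝ),(1:ℝ))) ((1:ℝ),(0:ℝ)) := by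
    rw [pdT, hXi]; exact h1'.deriv
  have e2 : pdXi (pdT f) p = (fderiv ℝ (fderiv ℝ f) p ((1:ℝ),(0:ℝ))) ((0:ℝ),(1:ℝ)) := by
    rw [pdXi, hT]; exact h2'.deriv
  rw [e1, e2]
  exact second_derivative_symmetric (fun y => (hd y).hasFDerivAt) (hF p).hasFDerivAt _ _

/-- The substitution `σ = ρ_ξ e^{α}` reduces the equation for
`ρ` to `σ_t = −i σ_{ξξ} + s₁(t) σ`, and removing the integrating factor gives
the conjugate heat equation with imaginary time. -/
theorem cole_hopf_rho
    (s₁ s₂ : ℝ → ℂ) (hs₁ : Continuous s₁) (hs₂ : Continuous s₂)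
    (α : ℝ × ℝ → ℂ) (hα : ContDiff ℝ 3 α)
    (hαeq : ∀ p, pdT α p = Complex.I * pdXi (pdXi α) p - Complex.I * (pdXi α p) ^ 2)
    (ρ : ℝ × ℝ → ℂ) (hρ : ContDiff ℝ 3 ρ)
    (hρeq : ∀ p, pdT ρ p = -Complex.I * pdXi (pdXi ρ) p
      - 2 * Complex.I * pdXi α p * pdXi ρ p + s₁ p.2 * ρ p + s₂ p.2)
    (σ β₃ : ℝ × ℝ → ℂ)
    (hσ : ∀ p, σ p = pdXi ρ p * Complex.exp (α p))
    (hβ₃ : ∀ p, β₃ p = pdXi ρ p * Complex.exp (α p)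
      * Complex.exp (-∫ τ in (0:ℝ)..p.2, s₁ τ)) :
    (∀ p, pdT σ p = -Complex.I * pdXi (pdXi σ) p + s₁ p.2 * σ p) ∧
    (∀ p, pdT β₃ p = -Complex.I * pdXi (pdXi β₃) p) := by

  -- smoothness facts
  have hαd : Differentiable ℝ α := hα.differentiable (by norm_num)
  have hρd : Differentiable ℝ ρ := hρ.differentiable (by norm_num)
  have hrξ : ContDiff ℝ (2 : ℕ∞) (pdXi ρ) := contDiff_pdXi (by exact_mod_cast hρ)
  have hrξd : Differentiable ℝ (pdXi ρ) := hrξ.differentiable (by norm_num)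
  have hrξξ : ContDiff ℝ (1 : ℕ∞) (pdXi (pdXi ρ)) := contDiff_pdXi (by exact_mod_cast hrξ)
  have hrξξd : Differentiable ℝ (pdXi (pdXi ρ)) := hrξξ.differentiable (by norm_num)
  have haξ : ContDiff ℝ (2 : ℕ∞) (pdXi α) := contDiff_pdXi (by exact_mod_cast hα)
  have haξd : Differentiable ℝ (pdXi α) := haξ.differentiable (by norm_num)
  have haξξd : Differentiable ℝ (pdXi (pdXi α)) :=
    (contDiff_pdXi (n := 1) (by exact_mod_cast haξ)).differentiable (by norm_num)
  -- σ as explicit function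
  have hσf : σ = fun q => pdXi ρ q * Complex.exp (α q) := funext hσ
  have hσC2 : ContDiff ℝ (2 : ℕ∞) σ := by
    rw [hσf]; exact hrξ.mul ((Complex.contDiff_exp.comp hα).of_le (by norm_num))
  have hσd : Differentiable ℝ σ := hσC2.differentiable (by norm_num)
  -- first space derivative of σ
  have hpdXiσ : ∀ q, pdXi σ q = pdXi (pdXi ρ) q * Complex.exp (α q)
      + pdXi ρ q * (Complex.exp (α q) * pdXi α q) := by
    intro q
    have h1 := hasDerivAt_pdXi hrξd q
    have h2 := (hasDerivAt_pdXi hαd q).cexp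
    rw [pdXi, hσf]
    exact (h1.mul h2).deriv
  have hpdXiσf : pdXi σ = fun q => pdXi (pdXi ρ) q * Complex.exp (α q)
      + pdXi ρ q * (Complex.exp (α q) * pdXi α q) := funext hpdXiσ
  -- second space derivative of σ
  have hpdXiXiσ : ∀ p, pdXi (pdXi σ) p =
      (pdXi (pdXi (pdXi ρ)) p * Complex.exp (α p)
        + pdXi (pdXi ρ) p * (Complex.exp (α p) * pdXi α p))
      + (pdXi (pdXi ρ) p * (Complex.exp (α p) * pdXi α p)
        + pdXi ρ p * ((Complex.exp (α p) * pdXi α p) * pdXi α p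
          + Complex.exp (α p) * pdXi (pdXi α) p)) := by
    intro p
    have h1 := hasDerivAt_pdXi hrξd p
    have h2 := (hasDerivAt_pdXi hαd p).cexp
    have h3 := hasDerivAt_pdXi hrξξd p
    have h4 := hasDerivAt_pdXi haξd p
    rw [pdXi, hpdXiσf]
    exact ((h3.mul h2).add (h1.mul (h2.mul h4))).deriv
  -- ξ-derivative of the equation for ρ_t
  have hpdTρf : pdT ρ = fun q => -Complex.I * pdXi (pdXi ρ) q
      - 2 * Complex.I * pdXi α q * pdXi ρ q + s₁ q.2 * ρ q + s₂ q.2 := funext hρeq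
  have hpdXiTρ : ∀ p, pdXi (pdT ρ) p =
      -Complex.I * pdXi (pdXi (pdXi ρ)) p
      - ((2 * Complex.I * pdXi (pdXi α) p) * pdXi ρ p
        + (2 * Complex.I * pdXi α p) * pdXi (pdXi ρ) p)
      + s₁ p.2 * pdXi ρ p := by
    intro p
    have h1 := hasDerivAt_pdXi hrξd p
    have h3 := hasDerivAt_pdXi hrξξd p
    have h4 := hasDerivAt_pdXi haξd p
    have h5 := hasDerivAt_pdXi hρd p
    rw [pdXi, hpdTρf]
    have hcomb := (((h3.const_mul (-Complex.I)).sub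
        (((h4.const_mul (2 * Complex.I)).mul h1))).add
        (h5.const_mul (s₁ p.2))).add_const (s₂ p.2)
    simpa using hcomb.deriv
  -- part 1
  have key : ∀ p, pdT σ p = -Complex.I * pdXi (pdXi σ) p + s₁ p.2 * σ p := by
    intro p
    have h5 := hasDerivAt_pdT hrξd p
    have h6 := (hasDerivAt_pdT hαd p).cexp
    have hTσ : pdT σ p = pdT (pdXi ρ) p * Complex.exp (α p)
        + pdXi ρ p * (Complex.exp (α p) * pdT α p) := by
      rw [pdT, hσf]
      exact (h5.mul h6).deriv
    rw [hTσ, pdT_pdXi_comm (hρ.of_le (by norm_num)) p, hpdXiTρ p, hpdXiXiσ p,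
      hαeq p, hσ p]
    ring
  refine ⟨key, ?_⟩
  -- part 2
  have hβf : β₃ = fun q => σ q * Complex.exp (-∫ τ in (0:ℝ)..q.2, s₁ τ) := by
    funext q; rw [hβ₃ q, hσ q]
  have hpdXiβ : ∀ q, pdXi β₃ q = pdXi σ q * Complex.exp (-∫ τ in (0:ℝ)..q.2, s₁ τ) := by
    intro q
    rw [pdXi, hβf]
    exact ((hasDerivAt_pdXi hσd q).mul_const (Complex.exp (-∫ τ in (0:ℝ)..q.2, s₁ τ))).deriv
  have hpdXiβf : pdXi β₃ = fun q => pdXi σ q * Complex.exp (-∫ τ in (0:ℝ)..q.2, s₁ τ) :=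
    funext hpdXiβ
  have hpdXiσd : Differentiable ℝ (pdXi σ) :=
    (contDiff_pdXi (n := 1) (by exact_mod_cast hσC2)).differentiable (by norm_num)
  intro p
  have hE : HasDerivAt (fun u => Complex.exp (-∫ τ in (0:ℝ)..u, s₁ τ))
      (Complex.exp (-∫ τ in (0:ℝ)..p.2, s₁ τ) * (-(s₁ p.2))) p.2 :=
    ((hs₁.integral_hasStrictDerivAt 0 p.2).hasDerivAt.neg).cexp
  have hTβ : pdT β₃ p = pdT σ p * Complex.exp (-∫ τ in (0:ℝ)..p.2, s₁ τ)
      + σ p * (Complex.exp (-∫ τ in (0:ℝ)..p.2, s₁ τ) * (-(s₁ p.2))) := by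
    rw [pdT, hβf]
    exact ((hasDerivAt_pdT hσd p).mul hE).deriv
  have hXXβ : pdXi (pdXi β₃) p = pdXi (pdXi σ) p * Complex.exp (-∫ τ in (0:ℝ)..p.2, s₁ τ) := by
    rw [pdXi, hpdXiβf]
    exact ((hasDerivAt_pdXi hpdXiσd p).mul_const (Complex.exp (-∫ τ in (0:ℝ)..p.2, s₁ τ))).deriv
  rw [hTβ, hXXβ, key p]
  ring
end

section
/- Let ᾱ, ρ̄ : ℝ → ℂ and δ̄, θ̄ : ℝ → ℂ be smooth functions of one variable such that θ̄(η) + ρ̄(ξ) ≠ 0 for all ξ, η ∈ ℝ. Define q̂₁(ξ,η) := −e^{δ̄(η)−ᾱ(ξ)}/(θ̄(η)+ρ̄(ξ)) and q̂₂(ξ,η) := −4·e^{−δ̄(η)+ᾱ(ξ)}·θ̄′(η)·ρ̄′(ξ)/(θ̄(η)+ρ̄(ξ)), so that q̂₁·q̂₂ = 4·θ̄′(η)·ρ̄′(ξ)/(θ̄(η)+ρ̄(ξ))². Then the functions g₁(ξ,η) := 2·θ̄″(η)/(θ̄(η)+ρ̄(ξ)) − 2·θ̄′(η)²/(θ̄(η)+ρ̄(ξ))²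 and g₂(ξ,η) := 2·ρ̄″(ξ)/(θ̄(η)+ρ̄(ξ)) − 2·ρ̄′(ξ)²/(θ̄(η)+ρ̄(ξ))² satisfy the nonlocality equations ∂g₁/∂ξ = −(1/2)·∂(q̂₁q̂₂)/∂η and ∂g₂/∂η = −(1/2)·∂(q̂₁q̂₂)/∂ξ. -/
/-- Explicit integration of the nonlocality equations for the
parametrized solution built from `ᾱ, ρ̄, δ̄, θ̄`. -/
theorem nonlocal_variables_explicit
    (a r d th : ℝ → ℂ)
    (ha : ContDiff ℝ (⊤ : ℕ∞) a) (hr : ContDiff ℝ (⊤ : ℕ∞) r)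
    (hd : ContDiff ℝ (⊤ : ℕ∞) d) (hth : ContDiff ℝ (⊤ : ℕ∞) th)
    (hne : ∀ ξ η : ℝ, th η + r ξ ≠ 0)
    (Qh₁ Qh₂ g₁ g₂ : ℝ × ℝ → ℂ)
    (hQh₁ : ∀ ξ η : ℝ, Qh₁ (ξ, η) = -Complex.exp (d η - a ξ) / (th η + r ξ))
    (hQh₂ : ∀ ξ η : ℝ, Qh₂ (ξ, η) =
      -4 * Complex.exp (-d η + a ξ) * deriv th η * deriv r ξ / (th η + r ξ))
    (hg₁ : ∀ ξ η : ℝ, g₁ (ξ, η) =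
      2 * deriv (deriv th) η / (th η + r ξ) - 2 * (deriv th η) ^ 2 / (th η + r ξ) ^ 2)
    (hg₂ : ∀ ξ η : ℝ, g₂ (ξ, η) =
      2 * deriv (deriv r) ξ / (th η + r ξ) - 2 * (deriv r ξ) ^ 2 / (th η + r ξ) ^ 2) :
    (∀ p, pdXi g₁ p = -(1 / 2) * pdEta (fun s => Qh₁ s * Qh₂ s) p) ∧
    (∀ p, pdEta g₂ p = -(1 / 2) * pdXi (fun s => Qh₁ s * Qh₂ s) p) := by
  have hth' : ContDiff ℝ (⊤ : ℕ∞) (deriv th) := (contDiff_infty_iff_deriv.mp hth).2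
  have hr' : ContDiff ℝ (⊤ : ℕ∞) (deriv r) := (contDiff_infty_iff_deriv.mp hr).2
  have Hth : ∀ s, HasDerivAt th (deriv th s) s :=
    fun s => (hth.differentiable (by simp) s).hasDerivAt
  have Hth' : ∀ s, HasDerivAt (deriv th) (deriv (deriv th) s) s :=
    fun s => (hth'.differentiable (by simp) s).hasDerivAt
  have Hr : ∀ s, HasDerivAt r (deriv r s) s :=
    fun s => (hr.differentiable (by simp) s).hasDerivAt
  have Hr' : ∀ s, HasDerivAt (deriv r) (deriv (deriv r) s) s :=
    fun s => (hr'.differentiable (by simp) s).hasDerivAt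
  have hprod : ∀ ξ η : ℝ, Qh₁ (ξ, η) * Qh₂ (ξ, η) =
      4 * deriv th η * deriv r ξ / (th η + r ξ) ^ 2 := by
    intro ξ η
    rw [hQh₁, hQh₂]
    have hE : Complex.exp (d η - a ξ) * Complex.exp (-d η + a ξ) = 1 := by
      rw [← Complex.exp_add, show (d η - a ξ) + (-d η + a ξ) = 0 by ring, Complex.exp_zero]
    field_simp [hne ξ η]
    linear_combination (deriv th η * deriv r ξ) * hE
  constructor
  · rintro ⟨ξ, η⟩
    have hu : HasDerivAt (fun s => th η + r s) (deriv r ξ) ξ := (Hr ξ).const_add _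
    have hA := (hasDerivAt_const ξ (2 * deriv (deriv th) η : ℂ)).div hu (hne ξ η)
    have hupow : HasDerivAt (fun s => (th η + r s) * (th η + r s))
        (deriv r ξ * (th η + r ξ) + (th η + r ξ) * deriv r ξ) ξ := hu.mul hu
    have hB := (hasDerivAt_const ξ (2 * (deriv th η) ^ 2 : ℂ)).div hupow
      (mul_ne_zero (hne ξ η) (hne ξ η))
    have hL := (hA.sub hB).deriv
    have hN : HasDerivAt (fun s => 4 * deriv th s * deriv r ξ)
        (4 * deriv (deriv th) η * deriv r ξ) η := ((Hth' η).const_mul 4).mul_const _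
    have hD : HasDerivAt (fun s => th s + r ξ) (deriv th η) η := (Hth η).add_const _
    have hDpow : HasDerivAt (fun s => (th s + r ξ) * (th s + r ξ))
        (deriv th η * (th η + r ξ) + (th η + r ξ) * deriv th η) η := hD.mul hD
    have hR := (hN.div hDpow (mul_ne_zero (hne ξ η) (hne ξ η))).deriv
    have e1 : (fun s => g₁ (s, η)) = fun s =>
        2 * deriv (deriv th) η / (th η + r s) - 2 * (deriv th η) ^ 2 / ((th η + r s) * (th η + r s)) :=
      funext fun s => by rw [hg₁ s η]; ring
    have e2 : (fun s => Qh₁ (ξ, s) * Qh₂ (ξ, s)) = fun s =>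
        4 * deriv th s * deriv r ξ / ((th s + r ξ) * (th s + r ξ)) :=
      funext fun s => by rw [hprod ξ s]; ring
    simp only [pdXi, pdEta]
    simp only [Pi.div_def, Pi.sub_def] at hL hR
    rw [e1, e2, hL, hR]
    have hD0 := hne ξ η
    field_simp
    ring
  · rintro ⟨ξ, η⟩
    have hu : HasDerivAt (fun s => th s + r ξ) (deriv th η) η := (Hth η).add_const _
    have hA := (hasDerivAt_const η (2 * deriv (deriv r) ξ : ℂ)).div hu (hne ξ η)
    have hupow : HasDerivAt (fun s => (th s + r ξ) * (th s + r ξ))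
        (deriv th η * (th η + r ξ) + (th η + r ξ) * deriv th η) η := hu.mul hu
    have hB := (hasDerivAt_const η (2 * (deriv r ξ) ^ 2 : ℂ)).div hupow
      (mul_ne_zero (hne ξ η) (hne ξ η))
    have hL := (hA.sub hB).deriv
    have hN : HasDerivAt (fun s => 4 * deriv th η * deriv r s)
        (4 * deriv th η * deriv (deriv r) ξ) ξ := (Hr' ξ).const_mul _
    have hD : HasDerivAt (fun s => th η + r s) (deriv r ξ) ξ := (Hr ξ).const_add _
    have hDpow : HasDerivAt (fun s => (th η + r s) * (th η + r s))
        (deriv r ξ * (th η + r ξ) + (th η + r ξ) * deriv r ξ) ξ := hD.mul hD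
    have hR := (hN.div hDpow (mul_ne_zero (hne ξ η) (hne ξ η))).deriv
    have e1 : (fun s => g₂ (ξ, s)) = fun s =>
        2 * deriv (deriv r) ξ / (th s + r ξ) - 2 * (deriv r ξ) ^ 2 / ((th s + r ξ) * (th s + r ξ)) :=
      funext fun s => by rw [hg₂ ξ s]; ring
    have e2 : (fun s => Qh₁ (s, η) * Qh₂ (s, η)) = fun s =>
        4 * deriv th η * deriv r s / ((th η + r s) * (th η + r s)) :=
      funext fun s => by rw [hprod s η]; ring
    simp only [pdXi, pdEta]
    simp only [Pi.div_def, Pi.sub_def] at hL hR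
    rw [e1, e2, hL, hR]
    have hD0 := hne ξ η
    field_simp
    ring
end
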